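/- arXiv:2406.12344 — 5 statements merged into one kernel-verified Lean document; each statement's English description precedes it below -/
import Mathlib

section
/- For x > 0, the function φ(x) = 1 + 2∑_{n=1}^∞ (-1)^n e^{-π n² x} satisfies the identity φ(x) = (2/√x) ∑_{n=0}^∞ e^{-π(n+1/2)²/x}. -/
/-!
Both sides are folded theta series over `ℤ`: the left one is `∑_{n ∈ ℤ} (-1)^n e^{-π n² x}`,
halved using that its terms are even in `n`, and the right one is
`x^{-1/2} ∑_{n ∈ ℤ} e^{-π (n + 1/2)² / x}`, halved using the symmetry `n ↦ -1 - n`.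
The two series over `ℤ` are equal by Poisson summation for the Gaussian
(`Complex.tsum_exp_neg_quadratic`), with the linear coefficient `b = -i/2`, which produces the
sign `(-1)^n` on one side and the shift by `1/2` on the other.
-/

open Real

theorem tsum_int_eq_two_nsmul_tsum_nat_of_neg_add_one {M : Type*} [AddCommMonoid M]
    [TopologicalSpace M] [ContinuousAdd M] [T2Space M] {f : ℤ → M}
    (hf : ∀ n : ℤ, f (-(n + 1)) = f n) (hs : Summable fun n : ℕ => f n) :
    ∑' n : ℤ, f n = 2 • ∑' n : ℕ, f n := by
  have hneg : (fun n : ℕ => f (-(n + 1))) = fun n : ℕ => f n := funext fun n => hf n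
  rw [tsum_of_nat_of_neg_add_one hs (hneg ▸ hs), hneg, two_nsmul]

theorem Real.summable_exp_neg_mul_int_add_sq (a : ℝ) {t : ℝ} (ht : 0 < t) :
    Summable fun n : ℤ => rexp (-π * (n + a) ^ 2 * t) := by
  convert HurwitzKernelBounds.summable_f_int 0 a ht using 2 with n
  simp [HurwitzKernelBounds.f_int]

open Complex in
theorem Real.tsum_neg_one_zpow_mul_exp_neg_mul_int_sq {a : ℝ} (ha : 0 < a) :
    ∑' n : ℤ, (-1 : ℝ) ^ n * rexp (-π * n ^ 2 * a) =
      1 / √a * ∑' n : ℤ, rexp (-π * (n + 1 / 2) ^ 2 / a) := by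
  have h := Complex.tsum_exp_neg_quadratic (a := (a : ℂ)) (by simpa) (-I / 2)
  have hl : ∀ n : ℤ, cexp (-π * a * n ^ 2 + 2 * π * (-I / 2) * n) =
      ((-1 : ℝ) ^ n * rexp (-π * n ^ 2 * a) : ℝ) := fun n => by
    rw [show -π * a * n ^ 2 + 2 * π * (-I / 2) * n = n * (-(π * I)) + -π * n ^ 2 * a by ring,
      Complex.exp_add, Complex.exp_int_mul, exp_neg_pi_mul_I]
    push_cast
    rfl
  have hr : ∀ n : ℤ, cexp (-π / a * (n + I * (-I / 2)) ^ 2) =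
      (rexp (-π * (n + 1 / 2) ^ 2 / a) : ℝ) := fun n => by
    rw [show (n : ℂ) + I * (-I / 2) = n + 1 / 2 by ring_nf; rw [I_sq]; ring]
    push_cast
    ring_nf
  have hsqrt : (1 : ℂ) / (a : ℂ) ^ (1 / 2 : ℂ) = ((1 / √a : ℝ) : ℂ) := by
    rw [Real.sqrt_eq_rpow]
    push_cast [Complex.ofReal_cpow ha.le]
    norm_num
  simp_rw [hl, hr, hsqrt, ← ofReal_tsum, ← ofReal_mul, ofReal_inj] at h
  exact h

theorem Real.tsum_neg_one_zpow_mul_exp_neg_mul_int_sq_eq_one_add_two_mul {x : ℝ} (hx : 0 < x) :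
    ∑' n : ℤ, (-1 : ℝ) ^ n * rexp (-π * n ^ 2 * x) =
      1 + 2 * ∑' n : ℕ, (-1 : ℝ) ^ (n + 1) * rexp (-π * ((n : ℝ) + 1) ^ 2 * x) := by
  set f : ℤ → ℝ := fun n => (-1) ^ n * rexp (-π * n ^ 2 * x)
  have hf_even : f.Even := fun n => by
    simp only [f, zpow_neg, ← inv_zpow, inv_neg_one, Int.cast_neg, neg_sq]
  have hf_summable : Summable f :=
    (summable_exp_neg_mul_int_add_sq 0 hx).of_norm_bounded fun n => by simp [f]
  have hf_succ : ∀ n : ℕ, f ((n + 1 : ℕ) : ℤ) =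
      (-1 : ℝ) ^ (n + 1) * rexp (-π * ((n : ℝ) + 1) ^ 2 * x) := fun n => by
    simp only [f]
    rw [zpow_natCast, Int.cast_natCast, Nat.cast_succ]
  rw [tsum_int_eq_zero_add_two_mul_tsum_pnat hf_even hf_summable,
    tsum_pnat_eq_tsum_succ (f := fun n : ℕ => f n)]
  simp only [hf_succ, f, zpow_zero, Int.cast_zero, nsmul_eq_mul]
  norm_num

theorem Real.tsum_exp_neg_mul_int_add_half_sq_eq_two_mul {x : ℝ} (hx : 0 < x) :
    ∑' n : ℤ, rexp (-π * (n + 1 / 2) ^ 2 / x) =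
      2 * ∑' n : ℕ, rexp (-π * ((n : ℝ) + 1 / 2) ^ 2 / x) := by
  set g : ℤ → ℝ := fun n => rexp (-π * (n + 1 / 2) ^ 2 / x)
  have hg_symm : ∀ n : ℤ, g (-(n + 1)) = g n := fun n => by
    simp only [g]
    push_cast
    ring_nf
  have hg_summable : Summable g :=
    (summable_exp_neg_mul_int_add_sq (1 / 2) (inv_pos.2 hx)).congr fun n => by
      simp only [g, div_eq_mul_inv]
  rw [tsum_int_eq_two_nsmul_tsum_nat_of_neg_add_one hg_symm
    (hg_summable.comp_injective Nat.cast_injective), nsmul_eq_mul, Nat.cast_ofNat]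
  simp only [g, Int.cast_natCast]

/-- For `x > 0`, `φ(x) = 1 + 2∑_{n=1}^∞ (-1)^n e^{-π n² x}`
equals `(2/√x) ∑_{n=0}^∞ e^{-π(n+1/2)²/x}`. -/
theorem phi_theta_transformation (x : ℝ) (hx : 0 < x) :
    1 + 2 * ∑' n : ℕ, (-1 : ℝ) ^ (n + 1) * Real.exp (-π * ((n : ℝ) + 1) ^ 2 * x) =
      (2 / Real.sqrt x) * ∑' n : ℕ, Real.exp (-π * ((n : ℝ) + 1 / 2) ^ 2 / x) := by
  rw [← tsum_neg_one_zpow_mul_exp_neg_mul_int_sq_eq_one_add_two_mul hx,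
    tsum_neg_one_zpow_mul_exp_neg_mul_int_sq hx, tsum_exp_neg_mul_int_add_half_sq_eq_two_mul hx]
  ring
end

section
/- For x > 0, the function φ(x) = 1 + 2∑_{n=1}^∞ (-1)^n e^{-π n² x} equals the infinite product ∏_{n=1}^∞ (1 - e^{-π n x})(1 - e^{-π(2n-1)x}). -/
open Real Finset Filter Topology

/-!
Gauss's finite form of the identity: Cauchy's `q`-binomial theorem
`∏_{j<m} (a + b q^{2j+1}) = ∑_k [m choose k]_{q²} q^{k²} a^{m-k} b^k`, taken at `m = 2n`,
`a = q^{2n}`, `b = -1`, gives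
`∏_{i<n} (1 - q^{2i+1})² = ∑_{|j| ≤ n} (-1)^j [2n choose n+j]_{q²} q^{j²}`.
As `n → ∞` each of these Gaussian binomials tends to `1 / ∏_k (1 - q^{2k})` and is bounded by it,
so by Tannery's theorem `∏_k (1 - q^{2k}) (1 - q^{2k-1})² = ∑_{j ∈ ℤ} (-1)^j q^{j²}`. Splitting
`∏_k (1 - q^k)` into its odd and even factors and putting `q = e^{-πx}` gives the theorem.
-/

section GaussianBinomial

variable {K : Type*} [Field K] {r : K}

/-- `qPochhammer r m` is `(r; r)_m`. -/
def qPochhammer (r : K) (m : ℕ) : K := ∏ i ∈ range m, (1 - r ^ (i + 1))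

/-- `gaussBinom r j k` is the Gaussian binomial coefficient `[j + k choose k]_r`, indexed by both
parts so that it is symmetric and no truncated subtraction occurs. -/
def gaussBinom (r : K) (j k : ℕ) : K := qPochhammer r (j + k) / (qPochhammer r j * qPochhammer r k)

@[simp]
lemma qPochhammer_zero : qPochhammer r 0 = 1 := prod_range_zero _

lemma qPochhammer_succ (m : ℕ) : qPochhammer r (m + 1) = qPochhammer r m * (1 - r ^ (m + 1)) :=
  prod_range_succ _ _

lemma qPochhammer_ne_zero (hr : ∀ n, r ^ (n + 1) ≠ 1) (m : ℕ) : qPochhammer r m ≠ 0 :=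
  prod_ne_zero_iff.2 fun i _ ↦ sub_ne_zero.2 (hr i).symm

lemma gaussBinom_comm (j k : ℕ) : gaussBinom r j k = gaussBinom r k j := by
  rw [gaussBinom, gaussBinom, add_comm, mul_comm]

lemma gaussBinom_zero_left (hr : ∀ n, r ^ (n + 1) ≠ 1) (k : ℕ) : gaussBinom r 0 k = 1 := by
  rw [gaussBinom, zero_add, qPochhammer_zero, one_mul, div_self (qPochhammer_ne_zero hr k)]

lemma gaussBinom_zero_right (hr : ∀ n, r ^ (n + 1) ≠ 1) (j : ℕ) : gaussBinom r j 0 = 1 := by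
  rw [gaussBinom_comm, gaussBinom_zero_left hr]

lemma gaussBinom_succ_succ (hr : ∀ n, r ^ (n + 1) ≠ 1) (j k : ℕ) :
    gaussBinom r (j + 1) (k + 1) =
      gaussBinom r j (k + 1) + r ^ (j + 1) * gaussBinom r (j + 1) k := by
  have hj := qPochhammer_ne_zero hr j
  have hk := qPochhammer_ne_zero hr k
  have hj' := sub_ne_zero.2 (hr j).symm
  have hk' := sub_ne_zero.2 (hr k).symm
  rw [gaussBinom, gaussBinom, gaussBinom, show j + 1 + (k + 1) = j + k + 1 + 1 by ring,
    show j + (k + 1) = j + k + 1 by ring, show j + 1 + k = j + k + 1 by ring]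
  simp only [qPochhammer_succ]
  field_simp
  ring

end GaussianBinomial

lemma sum_range_succ_succ_eq_sum_mul_add {R : Type*} [CommSemiring R] {F G : ℕ → R} {x y : R}
    {m : ℕ} (h_zero : F 0 = G 0 * x) (h_succ : ∀ k < m, F (k + 1) = G (k + 1) * x + G k * y)
    (h_top : F (m + 1) = G m * y) :
    ∑ k ∈ range (m + 2), F k = (∑ k ∈ range (m + 1), G k) * (x + y) := by
  rw [sum_range_succ', sum_range_succ, sum_congr rfl fun k hk ↦ h_succ k (mem_range.1 hk),
    sum_add_distrib, h_zero, h_top, mul_add, sum_mul, sum_mul, sum_range_succ' (G · * x),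
    sum_range_succ (G · * y)]
  ring

/-- Cauchy's `q`-binomial theorem, in base `q ^ 2`. -/
theorem prod_add_mul_pow_odd_eq_sum {K : Type*} [Field K] {q : K}
    (hq : ∀ n, (q ^ 2) ^ (n + 1) ≠ 1) (a b : K) (m : ℕ) :
    ∏ j ∈ range m, (a + b * q ^ (2 * j + 1)) =
      ∑ k ∈ range (m + 1), gaussBinom (q ^ 2) (m - k) k * q ^ (k ^ 2) * a ^ (m - k) * b ^ k := by
  induction m with
  | zero => simp [gaussBinom_zero_right hq]
  | succ m ih =>
    rw [prod_range_succ, ih]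
    refine (sum_range_succ_succ_eq_sum_mul_add ?_ (fun k hk ↦ ?_) ?_).symm
    · simp only [Nat.sub_zero, gaussBinom_zero_right hq]
      ring
    · obtain ⟨d, rfl⟩ : ∃ d, m = k + 1 + d := ⟨m - (k + 1), by omega⟩
      rw [show k + 1 + d + 1 - (k + 1) = d + 1 by omega, show k + 1 + d - (k + 1) = d by omega,
        show k + 1 + d - k = d + 1 by omega, gaussBinom_succ_succ hq]
      ring
    · simp only [Nat.sub_self, gaussBinom_zero_left hq]
      ring

section OddPowers

variable {R : Type*} [CommRing R] (q : R)

lemma prod_range_pow_odd (n : ℕ) : ∏ j ∈ range n, q ^ (2 * j + 1) = q ^ (n ^ 2) := by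
  induction n with
  | zero => simp
  | succ n ih => rw [prod_range_succ, ih, ← pow_add]; ring_nf

lemma prod_range_two_mul_pow_sub_pow_odd (n : ℕ) :
    ∏ j ∈ range (2 * n), (q ^ (2 * n) + (-1) * q ^ (2 * j + 1)) =
      (-1) ^ n * q ^ (3 * n ^ 2) * (∏ i ∈ range n, (1 - q ^ (2 * i + 1))) ^ 2 := by
  have h_low : ∀ j ∈ range n, q ^ (2 * n) + (-1) * q ^ (2 * j + 1) =
      (-1) * q ^ (2 * j + 1) * (1 - q ^ (2 * (n - 1 - j) + 1)) := fun j hj ↦ by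
    rw [show 2 * n = 2 * j + 1 + (2 * (n - 1 - j) + 1) by have := mem_range.1 hj; omega]
    ring
  have h_high : ∀ j ∈ range n, q ^ (2 * n) + (-1) * q ^ (2 * (n + j) + 1) =
      q ^ (2 * n) * (1 - q ^ (2 * j + 1)) := fun j _ ↦ by ring
  rw [show range (2 * n) = range (n + n) by rw [two_mul], prod_range_add, prod_congr rfl h_low,
    prod_congr rfl h_high, prod_mul_distrib, prod_mul_distrib,
    prod_range_reflect (fun j ↦ 1 - q ^ (2 * j + 1)), prod_const, card_range, prod_mul_distrib,
    prod_const, card_range, prod_range_pow_odd]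
  ring

end OddPowers

lemma sum_range_two_mul_add_one_eq {M : Type*} [AddCommMonoid M] (H : ℕ → M) (n : ℕ) :
    ∑ k ∈ range (2 * n + 1), H k = H n + ∑ j ∈ range n, (H (n - (j + 1)) + H (n + (j + 1))) := by
  rw [show 2 * n + 1 = n + (n + 1) by ring, sum_range_add, sum_range_succ', ← sum_range_reflect H n,
    add_zero, sum_add_distrib]
  simp only [Nat.sub_sub, add_comm 1]
  abel

theorem sq_prod_one_sub_pow_odd {K : Type*} [Field K] {q : K} (hq0 : q ≠ 0)
    (hq : ∀ n, (q ^ 2) ^ (n + 1) ≠ 1) (n : ℕ) :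
    (∏ i ∈ range n, (1 - q ^ (2 * i + 1))) ^ 2 = gaussBinom (q ^ 2) n n +
      2 * ∑ j ∈ range n, gaussBinom (q ^ 2) (n - (j + 1)) (n + (j + 1)) *
        ((-1) ^ (j + 1) * q ^ ((j + 1) ^ 2)) := by
  set H : ℕ → K := fun k ↦
    gaussBinom (q ^ 2) (2 * n - k) k * q ^ (k ^ 2) * (q ^ (2 * n)) ^ (2 * n - k) * (-1) ^ k
  set c : K := (-1) ^ n * q ^ (3 * n ^ 2)
  have H_add : ∀ j ≤ n,
      H (n + j) = c * (gaussBinom (q ^ 2) (n - j) (n + j) * ((-1) ^ j * q ^ (j ^ 2))) := by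
    intro j hj
    obtain ⟨d, rfl⟩ : ∃ d, n = d + j := ⟨n - j, by omega⟩
    simp only [H, c, show 2 * (d + j) - (d + j + j) = d by omega, Nat.add_sub_cancel]
    ring
  have H_sub : ∀ j ≤ n,
      H (n - j) = c * (gaussBinom (q ^ 2) (n - j) (n + j) * ((-1) ^ j * q ^ (j ^ 2))) := by
    intro j hj
    obtain ⟨d, rfl⟩ : ∃ d, n = d + j := ⟨n - j, by omega⟩
    simp only [H, c, show 2 * (d + j) - d = d + j + j by omega, Nat.add_sub_cancel,
      gaussBinom_comm (d + j + j)]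
    have h_sign : (-1 : K) ^ d = (-1) ^ (d + j) * (-1) ^ j := by
      rw [pow_add, mul_assoc, ← pow_add, ← two_mul, pow_mul, neg_one_sq, one_pow, mul_one]
    rw [h_sign]
    ring
  have h_cauchy : c * (∏ i ∈ range n, (1 - q ^ (2 * i + 1))) ^ 2 = ∑ k ∈ range (2 * n + 1), H k :=
    (prod_range_two_mul_pow_sub_pow_odd q n).symm.trans (prod_add_mul_pow_odd_eq_sum hq _ _ _)
  have H_mid : H n = c * gaussBinom (q ^ 2) n n := by simpa using H_add 0 n.zero_le
  refine mul_left_cancel₀ (mul_ne_zero (pow_ne_zero _ (neg_ne_zero.2 one_ne_zero))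
    (pow_ne_zero _ hq0) : c ≠ 0) ?_
  rw [h_cauchy, sum_range_two_mul_add_one_eq, H_mid, sum_congr rfl fun j hj ↦ by
    rw [H_sub (j + 1) (mem_range.1 hj), H_add (j + 1) (mem_range.1 hj)]]
  simp only [← two_mul, ← mul_sum]
  ring

lemma multipliable_one_sub_pow_comp {q : ℝ} (hq : |q| < 1) {e : ℕ → ℕ} (he : e.Injective) :
    Multipliable fun n ↦ 1 - q ^ e n := by
  simpa [sub_eq_add_neg] using Real.multipliable_one_add_of_summable
    ((summable_geometric_of_abs_lt_one hq).comp_injective he).neg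

lemma tprod_one_sub_pos {ι : Type*} {f : ι → ℝ} (hf : Summable f) (hf1 : ∀ i, f i < 1) :
    0 < ∏' i, (1 - f i) := by
  rw [← Real.rexp_tsum_eq_tprod (fun i ↦ sub_pos.2 (hf1 i))
    (by simpa [sub_eq_add_neg] using Real.summable_log_one_add_of_summable hf.neg)]
  exact Real.exp_pos _

section RealGaussianBinomial

variable {r : ℝ}

lemma qPochhammer_pos (hr0 : 0 ≤ r) (hr1 : r < 1) (m : ℕ) : 0 < qPochhammer r m :=
  prod_pos fun i _ ↦ sub_pos.2 (pow_lt_one₀ hr0 hr1 i.succ_ne_zero)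

lemma qPochhammer_antitone (hr0 : 0 ≤ r) (hr1 : r < 1) : Antitone (qPochhammer r) :=
  antitone_nat_of_succ_le fun m ↦ by
    rw [qPochhammer_succ]
    exact mul_le_of_le_one_right (qPochhammer_pos hr0 hr1 m).le (sub_le_self _ (pow_nonneg hr0 _))

lemma tendsto_qPochhammer (hr : |r| < 1) :
    Tendsto (qPochhammer r) atTop (𝓝 (∏' n, (1 - r ^ (n + 1)))) :=
  (multipliable_one_sub_pow_comp hr (add_left_injective 1)).hasProd.tendsto_prod_nat

lemma tprod_one_sub_pow_pos (hr0 : 0 ≤ r) (hr1 : r < 1) : 0 < ∏' n, (1 - r ^ (n + 1)) :=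
  tprod_one_sub_pos ((summable_geometric_of_lt_one hr0 hr1).comp_injective (add_left_injective 1))
    fun n ↦ pow_lt_one₀ hr0 hr1 n.succ_ne_zero

lemma gaussBinom_pos (hr0 : 0 ≤ r) (hr1 : r < 1) (j k : ℕ) : 0 < gaussBinom r j k :=
  div_pos (qPochhammer_pos hr0 hr1 _)
    (mul_pos (qPochhammer_pos hr0 hr1 _) (qPochhammer_pos hr0 hr1 _))

lemma gaussBinom_le_inv_tprod (hr0 : 0 ≤ r) (hr1 : r < 1) (j k : ℕ) :
    gaussBinom r j k ≤ (∏' n, (1 - r ^ (n + 1)))⁻¹ := by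
  have hj := qPochhammer_pos hr0 hr1 j
  have hk := qPochhammer_pos hr0 hr1 k
  calc gaussBinom r j k ≤ qPochhammer r j / (qPochhammer r j * qPochhammer r k) := by
        rw [gaussBinom]; gcongr; exact qPochhammer_antitone hr0 hr1 (j.le_add_right k)
    _ = (qPochhammer r k)⁻¹ := by field_simp
    _ ≤ _ := inv_anti₀ (tprod_one_sub_pow_pos hr0 hr1) ((qPochhammer_antitone hr0 hr1).le_of_tendsto
        (tendsto_qPochhammer (by rwa [abs_of_nonneg hr0])) k)

lemma tendsto_gaussBinom (hr0 : 0 ≤ r) (hr1 : r < 1) {a b : ℕ → ℕ} (ha : Tendsto a atTop atTop)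
    (hb : Tendsto b atTop atTop) :
    Tendsto (fun n ↦ gaussBinom r (a n) (b n)) atTop (𝓝 (∏' n, (1 - r ^ (n + 1)))⁻¹) := by
  have hP := tendsto_qPochhammer (abs_lt.2 ⟨by linarith, hr1⟩)
  have hD := (tprod_one_sub_pow_pos hr0 hr1).ne'
  have hab : Tendsto (fun n ↦ a n + b n) atTop atTop := tendsto_atTop_mono (fun n ↦ le_add_self) hb
  convert (hP.comp hab).div ((hP.comp ha).mul (hP.comp hb)) (mul_ne_zero hD hD) using 2
  · rfl
  · exact (div_mul_cancel_left₀ hD _).symm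

end RealGaussianBinomial

lemma tendsto_sum_range_of_dominated {G : Type*} [NormedAddCommGroup G] [CompleteSpace G]
    {f : ℕ → ℕ → G} {g : ℕ → G} {bound : ℕ → ℝ} (h_sum : Summable bound)
    (hab : ∀ k, Tendsto (f · k) atTop (𝓝 (g k))) (h_bound : ∀ n, ∀ k < n, ‖f n k‖ ≤ bound k) :
    Tendsto (fun n ↦ ∑ k ∈ range n, f n k) atTop (𝓝 (∑' k, g k)) := by
  let F n k := if k < n then f n k else 0
  have hF : ∀ n, ∑ k ∈ range n, f n k = ∑' k, F n k := fun n ↦ by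
    rw [tsum_eq_sum (s := range n) fun k hk ↦ if_neg (by simpa using hk)]
    exact sum_congr rfl fun k hk ↦ (if_pos (mem_range.1 hk)).symm
  simp only [hF]
  refine tendsto_tsum_of_dominated_convergence h_sum (fun k ↦ (hab k).congr' ?_) (.of_forall ?_)
  · filter_upwards [eventually_gt_atTop k] with n hn using (if_pos hn).symm
  · intro n k
    by_cases hk : k < n
    · simpa [F, hk] using h_bound n k hk
    · simpa [F, hk] using (norm_nonneg _).trans (h_bound (k + 1) k k.lt_succ_self)

theorem one_add_two_mul_tsum_eq_tprod_mul_sq {q : ℝ} (hq0 : 0 < q) (hq1 : q < 1) :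
    1 + 2 * ∑' n : ℕ, (-1) ^ (n + 1) * q ^ ((n + 1) ^ 2) =
      (∏' n : ℕ, (1 - (q ^ 2) ^ (n + 1))) * (∏' n : ℕ, (1 - q ^ (2 * n + 1))) ^ 2 := by
  have hr0 : 0 ≤ q ^ 2 := sq_nonneg q
  have hr1 : q ^ 2 < 1 := pow_lt_one₀ hq0.le hq1 two_ne_zero
  set D := ∏' n : ℕ, (1 - (q ^ 2) ^ (n + 1))
  have hD : 0 < D := tprod_one_sub_pow_pos hr0 hr1
  have h_lhs : Tendsto (fun n ↦ (∏ i ∈ range n, (1 - q ^ (2 * i + 1))) ^ 2) atTop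
      (𝓝 ((∏' n : ℕ, (1 - q ^ (2 * n + 1))) ^ 2)) :=
    ((multipliable_one_sub_pow_comp (by rwa [abs_of_pos hq0]) fun _ _ h ↦ by
      simpa using h).hasProd.tendsto_prod_nat).pow 2
  have h_rhs : Tendsto (fun n ↦ gaussBinom (q ^ 2) n n + 2 * ∑ j ∈ range n,
      gaussBinom (q ^ 2) (n - (j + 1)) (n + (j + 1)) * ((-1) ^ (j + 1) * q ^ ((j + 1) ^ 2)))
      atTop (𝓝 (D⁻¹ + 2 * ∑' j : ℕ, D⁻¹ * ((-1) ^ (j + 1) * q ^ ((j + 1) ^ 2)))) := by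
    refine (tendsto_gaussBinom hr0 hr1 tendsto_id tendsto_id).add (.const_mul 2
      (tendsto_sum_range_of_dominated ((summable_geometric_of_lt_one hq0.le hq1).mul_left D⁻¹)
        (fun j ↦ ?_) fun n j _ ↦ ?_))
    · exact (tendsto_gaussBinom hr0 hr1 (tendsto_sub_atTop_nat _)
        (tendsto_add_atTop_nat _)).mul_const _
    · rw [norm_mul, norm_mul, norm_pow, norm_neg, norm_one, one_pow, one_mul,
        Real.norm_of_nonneg (gaussBinom_pos hr0 hr1 _ _).le, Real.norm_of_nonneg (by positivity)]
      exact mul_le_mul (gaussBinom_le_inv_tprod hr0 hr1 _ _)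
        (pow_le_pow_of_le_one hq0.le hq1.le (by nlinarith)) (by positivity) (by positivity)
  have h_limit := tendsto_nhds_unique (h_lhs.congr fun n ↦ sq_prod_one_sub_pow_odd hq0.ne'
    (fun n ↦ (pow_lt_one₀ hr0 hr1 n.succ_ne_zero).ne) n) h_rhs
  rw [tsum_mul_left] at h_limit
  rw [h_limit]
  field_simp

lemma tprod_one_sub_pow_succ_eq_odd_mul_even {q : ℝ} (hq : |q| < 1) :
    ∏' n : ℕ, (1 - q ^ (n + 1)) =
      (∏' n : ℕ, (1 - q ^ (2 * n + 1))) * ∏' n : ℕ, (1 - (q ^ 2) ^ (n + 1)) := by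
  rw [← tprod_even_mul_odd (f := fun n ↦ 1 - q ^ (n + 1))
    (multipliable_one_sub_pow_comp hq fun _ _ h ↦ by simpa using h)
    (multipliable_one_sub_pow_comp hq fun _ _ h ↦ by simpa using h)]
  simp only [← pow_mul]
  ring_nf

/-- For `x > 0`, `φ(x) = 1 + 2∑_{n=1}^∞ (-1)^n e^{-π n² x}` equals the infinite product
`∏_{n=1}^∞ (1 - e^{-π n x})(1 - e^{-π(2n-1)x})`. -/
theorem phi_triple_product (x : ℝ) (hx : 0 < x) :
    1 + 2 * ∑' n : ℕ, (-1 : ℝ) ^ (n + 1) * Real.exp (-π * ((n : ℝ) + 1) ^ 2 * x) =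
      ∏' n : ℕ,
        (1 - Real.exp (-π * ((n : ℝ) + 1) * x)) *
          (1 - Real.exp (-π * (2 * ((n : ℝ) + 1) - 1) * x)) := by
  set q := rexp (-π * x)
  have hq0 : 0 < q := exp_pos _
  have hq1 : q < 1 := Real.exp_lt_one_iff.2 (by nlinarith [pi_pos])
  have hq : |q| < 1 := by rwa [abs_of_pos hq0]
  have h_pow (y : ℝ) (m : ℕ) (hy : (m : ℝ) = y) : rexp (-π * y * x) = q ^ m := by
    rw [← hy, ← exp_nat_mul]
    ring_nf
  have h_sq (n : ℕ) : rexp (-π * ((n : ℝ) + 1) ^ 2 * x) = q ^ ((n + 1) ^ 2) :=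
    h_pow _ _ (by push_cast; ring)
  have h_succ (n : ℕ) : rexp (-π * ((n : ℝ) + 1) * x) = q ^ (n + 1) :=
    h_pow _ _ (by push_cast; ring)
  have h_odd (n : ℕ) : rexp (-π * (2 * ((n : ℝ) + 1) - 1) * x) = q ^ (2 * n + 1) :=
    h_pow _ _ (by push_cast; ring)
  simp only [h_sq, h_succ, h_odd]
  rw [one_add_two_mul_tsum_eq_tprod_mul_sq hq0 hq1,
    (multipliable_one_sub_pow_comp hq (add_left_injective 1)).tprod_mul
      (multipliable_one_sub_pow_comp hq fun _ _ h ↦ by simpa using h),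
    tprod_one_sub_pow_succ_eq_odd_mul_even hq]
  ring
end

section
/- For all x > 0, the derivative of φ(x) = 1 + 2∑_{n=1}^∞ (-1)^n e^{-π n² x} satisfies φ'(x) ≤ 2π e^{-π x}. -/
/-!
For `x ≥ 1/14` differentiate termwise: `φ'(x) / 2 = ∑ₙ (-1)ⁿ g(n + 1)` with
`g(A) = π A² e^{-π A² x}`, an alternating series whose terms decrease from the second one on,
so it is at most its first term `π e^{-π x}`. For `x ≤ 1/14` use Jacobi's transformation
`φ(x) = 2 x^{-1/2} ∑ₙ e^{-π (n + 1/2)² / x}` (Poisson summation): the factor `x^{-1/2}` is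
decreasing and the sum is positive, so
`φ'(x) ≤ 2 x^{-5/2} ∑ₙ π (n + 1/2)² e^{-π (n + 1/2)² / x} ≤ 4π x^{-5/2} e^{-π / (4x)}`,
which is far below `2π e^{-π x}` for small `x`.
-/

open Real Filter Topology
open scoped Nat

namespace PhiDeriv

section DirichletSeries

variable {c : ℕ → ℝ}

lemma summable_exp_neg_mul (hc : ∀ n : ℕ, (n : ℝ) ≤ c n) {t : ℝ} (ht : 0 < t) :
    Summable fun n ↦ exp (-(c n * t)) := by
  refine (summable_geometric_of_lt_one (exp_pos _).le
    (exp_lt_one_iff.2 (neg_lt_zero.2 ht))).of_nonneg_of_le (fun n ↦ (exp_pos _).le) fun n ↦ ?_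
  rw [← exp_nat_mul, exp_le_exp]
  nlinarith [hc n]

lemma summable_mul_exp_neg_mul (hc : ∀ n : ℕ, (n : ℝ) ≤ c n) {t : ℝ} (ht : 0 < t) :
    Summable fun n ↦ c n * exp (-(c n * t)) := by
  have hc0 n : 0 ≤ c n := (Nat.cast_nonneg n).trans (hc n)
  refine ((summable_exp_neg_mul hc (half_pos ht)).mul_left (2 / t)).of_nonneg_of_le
    (fun n ↦ mul_nonneg (hc0 n) (exp_pos _).le) fun n ↦ ?_
  have h := add_one_le_exp (c n * (t / 2))
  calc c n * exp (-(c n * t)) = 2 / t * ((c n * (t / 2)) * exp (-(c n * t))) := by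
        field_simp
    _ ≤ 2 / t * (exp (c n * (t / 2)) * exp (-(c n * t))) := by gcongr; linarith
    _ = 2 / t * exp (-(c n * (t / 2))) := by rw [← exp_add]; ring_nf

lemma hasDerivAt_tsum_mul_exp_neg_mul {a : ℕ → ℝ} (ha : ∀ n, |a n| ≤ 1)
    (hc : ∀ n : ℕ, (n : ℝ) ≤ c n) {x : ℝ} (hx : 0 < x) :
    HasDerivAt (fun t ↦ ∑' n, a n * exp (-(c n * t)))
      (-∑' n, c n * (a n * exp (-(c n * x)))) x := by
  have hc0 n : 0 ≤ c n := (Nat.cast_nonneg n).trans (hc n)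
  have hterm n y : HasDerivAt (fun t ↦ a n * exp (-(c n * t)))
      (-(c n * (a n * exp (-(c n * y))))) y :=
    ((((hasDerivAt_id' y).const_mul (c n)).neg.exp).const_mul (a n)).congr_deriv
      (by simp only [Pi.neg_apply]; ring)
  rw [← tsum_neg]
  refine hasDerivAt_tsum_of_isPreconnected (summable_mul_exp_neg_mul hc (half_pos hx))
    isOpen_Ioi isPreconnected_Ioi (fun n y _ ↦ hterm n y) (fun n y hy ↦ ?_) (half_lt_self hx)
    ((summable_exp_neg_mul hc hx).of_norm_bounded fun n ↦ ?_) (half_lt_self hx)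
  · rw [norm_neg, norm_mul, norm_mul, norm_of_nonneg (hc0 n), norm_of_nonneg (exp_pos _).le]
    refine mul_le_mul_of_nonneg_left
      ((mul_le_of_le_one_left (exp_pos _).le (ha n)).trans ?_) (hc0 n)
    exact exp_le_exp.2 (neg_le_neg (mul_le_mul_of_nonneg_left hy.le (hc0 n)))
  · rw [norm_mul, norm_of_nonneg (exp_pos _).le]
    exact mul_le_of_le_one_left (exp_pos _).le (ha n)

end DirichletSeries

lemma natCast_le_pi_mul_sq {n : ℕ} {b : ℝ} (hb : (n : ℝ) ≤ b) :
    (n : ℝ) ≤ π * b ^ 2 := by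
  have hn : (n : ℝ) ≤ (n : ℝ) ^ 2 := by exact_mod_cast Nat.le_self_pow two_ne_zero n
  have hb2 : (n : ℝ) ^ 2 ≤ b ^ 2 := pow_le_pow_left₀ (Nat.cast_nonneg n) hb 2
  nlinarith [pi_gt_three, sq_nonneg b]

lemma tsum_alternating_le_of_antitone_succ {f : ℕ → ℝ} (hf : Summable f)
    (hfa : Antitone fun n ↦ f (n + 1)) : ∑' n, (-1) ^ n * f n ≤ f 0 := by
  have htail := hfa.alternating_series_le_tendsto
    (hf.comp_injective (add_left_injective 1)).tendsto_alternating_series_tsum 0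
  rw [hf.alternating.tsum_eq_zero_add]
  simp only [Function.comp_def, mul_zero, Finset.range_zero, Finset.sum_empty, pow_succ,
    mul_neg_one, neg_mul, tsum_neg, pow_zero, one_mul] at htail ⊢
  linarith

noncomputable def phi (x : ℝ) : ℝ :=
  1 + 2 * ∑' n : ℕ, (-1 : ℝ) ^ (n + 1) * exp (-(π * ((n : ℝ) + 1) ^ 2 * x))

lemma hasDerivAt_phi {x : ℝ} (hx : 0 < x) :
    HasDerivAt phi (2 * ∑' n : ℕ,
      (-1) ^ n * (π * ((n : ℝ) + 1) ^ 2 * exp (-(π * ((n : ℝ) + 1) ^ 2 * x)))) x := by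
  have h := hasDerivAt_tsum_mul_exp_neg_mul (a := fun n ↦ (-1 : ℝ) ^ (n + 1))
    (c := fun n ↦ π * ((n : ℝ) + 1) ^ 2) (fun n ↦ by simp)
    (fun n ↦ natCast_le_pi_mul_sq (by linarith)) hx
  refine ((h.const_mul 2).const_add 1).congr_deriv ?_
  rw [← tsum_neg]
  congr 2 with n
  rw [pow_succ]
  ring

lemma sq_mul_exp_neg_succ_le {x A : ℝ} (hx : 1 / 14 ≤ x) (hA : 2 ≤ A) :
    π * (A + 1) ^ 2 * exp (-(π * (A + 1) ^ 2 * x)) ≤ π * A ^ 2 * exp (-(π * A ^ 2 * x)) := by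
  have hexp : 9 / 4 ≤ exp ((2 * A + 1) * π * x) := by
    have : (1 : ℝ) ≤ (2 * A + 1) * π * x := by
      have : 15 ≤ (2 * A + 1) * π := by nlinarith [pi_gt_three]
      nlinarith
    linarith [exp_one_gt_d9, exp_le_exp.2 this]
  have hsq : (A + 1) ^ 2 ≤ A ^ 2 * exp ((2 * A + 1) * π * x) := by
    nlinarith [mul_le_mul_of_nonneg_left hexp (sq_nonneg A)]
  calc π * (A + 1) ^ 2 * exp (-(π * (A + 1) ^ 2 * x))
      ≤ π * (A ^ 2 * exp ((2 * A + 1) * π * x)) * exp (-(π * (A + 1) ^ 2 * x)) := by gcongr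
    _ = π * A ^ 2 * exp (-(π * A ^ 2 * x)) := by
      rw [mul_assoc π, mul_assoc, mul_assoc, ← exp_add]; ring_nf

lemma deriv_phi_le_of_ge {x : ℝ} (hx : 1 / 14 ≤ x) :
    deriv phi x ≤ 2 * π * exp (-(π * x)) := by
  have hx0 : 0 < x := by linarith
  rw [(hasDerivAt_phi hx0).deriv]
  have hle := tsum_alternating_le_of_antitone_succ
    (f := fun n : ℕ ↦ π * ((n : ℝ) + 1) ^ 2 * exp (-(π * ((n : ℝ) + 1) ^ 2 * x)))
    (summable_mul_exp_neg_mul (c := fun n ↦ π * ((n : ℝ) + 1) ^ 2)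
      (fun n ↦ natCast_le_pi_mul_sq (by linarith)) hx0)
    (antitone_nat_of_succ_le fun n ↦ by
      rw [show ((n + 1 + 1 : ℕ) : ℝ) + 1 = n + 2 + 1 by push_cast; ring,
        show ((n + 1 : ℕ) : ℝ) + 1 = n + 2 by push_cast; ring]
      exact sq_mul_exp_neg_succ_le hx (le_add_of_nonneg_left n.cast_nonneg))
  simp only [Nat.cast_zero, zero_add, one_pow, mul_one] at hle
  linarith

lemma tsum_int_neg_one_zpow_mul_exp_eq {x : ℝ} (hx : 0 < x) :
    ∑' n : ℤ, (-1 : ℝ) ^ n * exp (-(π * n ^ 2 * x)) =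
      (√x)⁻¹ * ∑' n : ℤ, exp (-(π * (n + 1 / 2) ^ 2 * x⁻¹)) := by
  -- Poisson summation with the twist `b = -i/2`, for which `exp (2πbn) = (-1)ⁿ`
  have h := Complex.tsum_exp_neg_quadratic (a := x) (by simpa using hx) (-Complex.I / 2)
  have hI : Complex.I * (-Complex.I / 2) = 1 / 2 := by
    rw [mul_div_assoc', mul_neg, Complex.I_mul_I]; ring
  apply Complex.ofReal_injective
  push_cast
  convert h using 2
  · funext n
    rw [show -π * x * n ^ 2 + 2 * π * (-Complex.I / 2) * n =
        -(π * n ^ 2 * x) + n * -(π * Complex.I) by ring,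
      Complex.exp_add, Complex.exp_int_mul, Complex.exp_neg_pi_mul_I, mul_comm]
  · rw [sqrt_eq_rpow, Complex.ofReal_cpow hx.le, one_div, one_div]
    norm_num
  · refine tsum_congr fun n ↦ ?_
    rw [hI]
    ring_nf

lemma phi_eq_tsum_int {x : ℝ} (hx : 0 < x) :
    phi x = ∑' n : ℤ, (-1 : ℝ) ^ n * exp (-(π * n ^ 2 * x)) := by
  set f : ℤ → ℝ := fun n ↦ (-1 : ℝ) ^ n * exp (-(π * n ^ 2 * x))
  have hf : f.Even := fun n ↦ by simp only [f, ← inv_zpow', inv_neg_one, Int.cast_neg, neg_sq]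
  have hs : Summable fun n : ℕ ↦ f n :=
    (summable_exp_neg_mul (c := fun n : ℕ ↦ π * (n : ℝ) ^ 2)
      (fun n ↦ natCast_le_pi_mul_sq le_rfl) hx).of_norm_bounded fun n ↦ by simp [f]
  rw [tsum_int_eq_zero_add_two_mul_tsum_pnat hf
    (hs.of_nat_of_neg_add_one
      (by simpa only [hf _, Nat.cast_succ] using (summable_nat_add_iff 1).2 hs)),
    tsum_pnat_eq_tsum_succ (f := fun n : ℕ ↦ f n)]
  simp [phi, f, zpow_add_one₀, pow_succ]

lemma tsum_int_exp_neg_half_sq {t : ℝ} (ht : 0 < t) :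
    ∑' n : ℤ, exp (-(π * (n + 1 / 2) ^ 2 * t)) =
      2 * ∑' n : ℕ, exp (-(π * (n + 1 / 2) ^ 2 * t)) := by
  have hs := summable_exp_neg_mul (c := fun n : ℕ ↦ π * ((n : ℝ) + 1 / 2) ^ 2)
    (fun n ↦ natCast_le_pi_mul_sq (by linarith)) ht
  have hneg (n : ℕ) : (((-(n + 1) : ℤ) : ℝ) + 1 / 2) ^ 2 = ((n : ℝ) + 1 / 2) ^ 2 := by
    push_cast; ring
  rw [tsum_of_nat_of_neg_add_one (by simpa using hs) (by simpa only [hneg] using hs)]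
  simp only [hneg, Int.cast_natCast]
  ring

lemma phi_eq_inv_sqrt_mul_tsum {x : ℝ} (hx : 0 < x) :
    phi x = 2 * (√x)⁻¹ * ∑' n : ℕ, exp (-(π * ((n : ℝ) + 1 / 2) ^ 2 * x⁻¹)) := by
  rw [phi_eq_tsum_int hx, tsum_int_neg_one_zpow_mul_exp_eq hx,
    tsum_int_exp_neg_half_sq (inv_pos.2 hx)]
  ring

lemma mul_exp_neg_half_sq_le_geometric {y : ℝ} (hy : 0 ≤ y) (n : ℕ) :
    π * ((n : ℝ) + 1 / 2) ^ 2 * exp (-(π * ((n : ℝ) + 1 / 2) ^ 2 * y)) ≤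
      π * exp (-(π / 4 * y)) * (4 * exp (-(2 * π * y))) ^ n := by
  have hpow : ((n : ℝ) + 1 / 2) ^ 2 ≤ 4 ^ n := by
    have : (n : ℝ) + 1 ≤ 2 ^ n := by exact_mod_cast Nat.lt_two_pow_self
    calc ((n : ℝ) + 1 / 2) ^ 2 ≤ (2 ^ n) ^ 2 := by gcongr; linarith
      _ = 4 ^ n := by rw [← pow_mul, mul_comm, pow_mul]; norm_num
  -- `(n + 1/2)² = 1/4 + n² + n ≥ 1/4 + 2n`
  have hexp : exp (-(π * ((n : ℝ) + 1 / 2) ^ 2 * y)) ≤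
      exp (-(π / 4 * y)) * exp (-(2 * π * y)) ^ n := by
    rw [← exp_nat_mul, ← exp_add, exp_le_exp]
    have hn : (n : ℝ) ≤ (n : ℝ) ^ 2 := by exact_mod_cast Nat.le_self_pow two_ne_zero n
    nlinarith [mul_le_mul_of_nonneg_right hn (by positivity : 0 ≤ π * y)]
  calc π * ((n : ℝ) + 1 / 2) ^ 2 * exp (-(π * ((n : ℝ) + 1 / 2) ^ 2 * y))
      ≤ π * 4 ^ n * (exp (-(π / 4 * y)) * exp (-(2 * π * y)) ^ n) := by gcongr
    _ = π * exp (-(π / 4 * y)) * (4 * exp (-(2 * π * y))) ^ n := by rw [mul_pow]; ring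

lemma tsum_mul_exp_neg_half_sq_le {y : ℝ} (hy : 1 ≤ y) :
    ∑' n : ℕ, π * ((n : ℝ) + 1 / 2) ^ 2 * exp (-(π * ((n : ℝ) + 1 / 2) ^ 2 * y)) ≤
      2 * π * exp (-(π / 4 * y)) := by
  set q := 4 * exp (-(2 * π * y))
  have hq : q ≤ 1 / 2 := by
    have h := quadratic_le_exp_of_nonneg (x := 2 * π * y) (by positivity)
    have h6 : 6 ≤ 2 * π * y := by nlinarith [pi_gt_three]
    have : 16 ≤ exp (2 * π * y) := by nlinarith
    rw [show q = 4 * (exp (2 * π * y))⁻¹ from congrArg _ (exp_neg _)]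
    calc 4 * (exp (2 * π * y))⁻¹ ≤ 4 * 16⁻¹ := by gcongr
      _ ≤ 1 / 2 := by norm_num
  have hq0 : 0 ≤ q := by positivity
  have hgeom := summable_geometric_of_lt_one hq0 (by linarith)
  calc ∑' n : ℕ, π * ((n : ℝ) + 1 / 2) ^ 2 * exp (-(π * ((n : ℝ) + 1 / 2) ^ 2 * y))
      ≤ ∑' n : ℕ, π * exp (-(π / 4 * y)) * q ^ n :=
        (summable_mul_exp_neg_mul (c := fun n : ℕ ↦ π * ((n : ℝ) + 1 / 2) ^ 2)
          (fun n ↦ natCast_le_pi_mul_sq (by linarith)) (by linarith)).tsum_le_tsum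
          (mul_exp_neg_half_sq_le_geometric (by linarith)) (hgeom.mul_left _)
    _ = π * exp (-(π / 4 * y)) * (1 - q)⁻¹ := by
        rw [tsum_mul_left, tsum_geometric_of_lt_one hq0 (by linarith)]
    _ ≤ π * exp (-(π / 4 * y)) * 2 := by
        gcongr
        rw [inv_le_comm₀ (by linarith) two_pos]
        linarith
    _ = 2 * π * exp (-(π / 4 * y)) := by ring

lemma two_mul_inv_sqrt_mul_exp_le {x : ℝ} (hx : 0 < x) (hx' : x ≤ 1 / 14) :
    2 * (√x)⁻¹ * (x ^ 2)⁻¹ * exp (-(π / 4 * x⁻¹)) ≤ exp (-(π * x)) := by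
  have hsqrt : 3 * x ≤ √x := by
    rw [le_sqrt (by positivity) hx.le]
    nlinarith
  have hexp : exp (-(π / 4 * x⁻¹)) ≤ 8 ! * (4 * x / 3) ^ 8 := by
    have h := pow_div_factorial_le_exp (x := 3 / (4 * x)) (by positivity) 8
    calc exp (-(π / 4 * x⁻¹)) ≤ exp (-(3 / (4 * x))) := by
          rw [exp_le_exp, neg_le_neg_iff, ← div_eq_mul_inv, div_div]
          gcongr
          exact pi_gt_three.le
      _ = (exp (3 / (4 * x)))⁻¹ := exp_neg _
      _ ≤ ((3 / (4 * x)) ^ 8 / 8 !)⁻¹ := inv_anti₀ (by positivity) h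
      _ = 8 ! * (4 * x / 3) ^ 8 := by field_simp
  have hx5 : x ^ 5 ≤ (1 / 14) ^ 5 := pow_le_pow_left₀ hx.le hx' 5
  calc 2 * (√x)⁻¹ * (x ^ 2)⁻¹ * exp (-(π / 4 * x⁻¹))
      ≤ 2 * (3 * x)⁻¹ * (x ^ 2)⁻¹ * (8 ! * (4 * x / 3) ^ 8) := by gcongr
    _ = 2 * 8 ! * 4 ^ 8 / 3 ^ 9 * x ^ 5 := by field_simp
    _ ≤ 1 - π * x := by
        norm_num [Nat.factorial] at hx5 ⊢
        nlinarith [pi_lt_d2]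
    _ ≤ exp (-(π * x)) := by linarith [add_one_le_exp (-(π * x))]

lemma deriv_phi_le_of_le {x : ℝ} (hx : 0 < x) (hx' : x ≤ 1 / 14) :
    deriv phi x ≤ 2 * π * exp (-(π * x)) := by
  set c : ℕ → ℝ := fun n ↦ π * ((n : ℝ) + 1 / 2) ^ 2
  set H : ℝ → ℝ := fun y ↦ ∑' n, 1 * exp (-(c n * y))
  set S := ∑' n, c n * (1 * exp (-(c n * x⁻¹)))
  have hH := hasDerivAt_tsum_mul_exp_neg_mul (a := fun _ ↦ 1) (fun _ ↦ by simp)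
    (c := c) (fun n ↦ natCast_le_pi_mul_sq (by linarith)) (inv_pos.2 hx)
  have hphi : phi =ᶠ[𝓝 x] fun t ↦ 2 * (√t)⁻¹ * H t⁻¹ := by
    filter_upwards [Ioi_mem_nhds hx] with t ht
    simp only [phi_eq_inv_sqrt_mul_tsum ht, H, c, one_mul]
  have hD := (((hasDerivAt_sqrt hx.ne').inv (sqrt_ne_zero'.2 hx)).const_mul 2).mul
    (hH.comp x (hasDerivAt_inv hx.ne'))
  rw [(hD.congr_of_eventuallyEq hphi).deriv]
  have hS : S ≤ 2 * π * exp (-(π / 4 * x⁻¹)) := by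
    simpa only [S, c, one_mul] using
      tsum_mul_exp_neg_half_sq_le (one_le_inv_iff₀.2 ⟨hx, by linarith⟩)
  have hfirst : 2 * (-(1 / (2 * √x)) / √x ^ 2) * H x⁻¹ ≤ 0 := by
    rw [neg_div, mul_neg, neg_mul, neg_nonpos]
    positivity
  have hnum := two_mul_inv_sqrt_mul_exp_le hx hx'
  calc 2 * (-(1 / (2 * √x)) / √x ^ 2) * H x⁻¹ + 2 * (√x)⁻¹ * (-S * -(x ^ 2)⁻¹)
      ≤ 2 * (√x)⁻¹ * (x ^ 2)⁻¹ * S := by linarith [neg_mul_neg S (x ^ 2)⁻¹]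
    _ ≤ 2 * (√x)⁻¹ * (x ^ 2)⁻¹ * (2 * π * exp (-(π / 4 * x⁻¹))) := by gcongr
    _ ≤ 2 * π * exp (-(π * x)) := by nlinarith [pi_pos]

end PhiDeriv

/-- For all `x > 0`, the derivative of `φ(x) = 1 + 2∑_{n=1}^∞ (-1)^n e^{-π n² x}`
satisfies `φ'(x) ≤ 2π e^{-π x}`. -/
theorem phi_deriv_le (x : ℝ) (hx : 0 < x) :
    deriv (fun x : ℝ =>
        1 + 2 * ∑' n : ℕ, (-1 : ℝ) ^ (n + 1) * Real.exp (-π * ((n : ℝ) + 1) ^ 2 * x)) x ≤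
      2 * π * Real.exp (-π * x) := by
  have hphi : (fun x : ℝ ↦
      1 + 2 * ∑' n : ℕ, (-1 : ℝ) ^ (n + 1) * Real.exp (-π * ((n : ℝ) + 1) ^ 2 * x)) =
      PhiDeriv.phi := by
    funext t
    simp only [PhiDeriv.phi, neg_mul]
  rw [hphi, neg_mul]
  rcases le_total x (1 / 14) with hsmall | hlarge
  · exact PhiDeriv.deriv_phi_le_of_le hx hsmall
  · exact PhiDeriv.deriv_phi_le_of_ge hlarge
end

section
/- For 0 < x < 1, the derivative of φ(x) = (2/√x) ∑_{n=0}^∞ e^{-π(n+1/2)²/x} satisfies φ'(x) ≤ (π/2) x^{-5/2} e^{-π/(4x)}. -/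
/-!
With `c n = π (n + 1/2)²` and `E n = exp (-c n / x)`, termwise differentiation gives
`x^{3/2} φ'(x) = ∑ (2 c n / x) E n - ∑ E n = (2 c 0 / x) E 0 + ∑ ((2 c (n+1) / x) E (n+1) - E n)`.
Since `c (n+1) - c n = 2π(n+1)`, the bracket is nonpositive as soon as
`2 c (n+1) / x ≤ exp (2π(n+1) / x)`, which for `x ≤ 1` follows from `exp y ≥ y² / 2`.
What is left, `(2 c 0 / x) E 0`, is the bound.
-/

open Real

theorem mul_exp_neg_le_two_mul_exp_neg_half (w : ℝ) : w * exp (-w) ≤ 2 * exp (-(w / 2)) :=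
  calc w * exp (-w) = 2 * (w / 2) * exp (-(w / 2)) * exp (-(w / 2)) := by
        rw [mul_assoc _ (exp _), ← exp_add]; ring_nf
    _ ≤ 2 * exp (w / 2) * exp (-(w / 2)) * exp (-(w / 2)) := by
        gcongr; linarith [add_one_le_exp (w / 2)]
    _ = 2 * exp (-(w / 2)) := by rw [mul_assoc 2, ← exp_add]; simp

section TsumExpNegDiv

variable {c : ℕ → ℝ} (hc : ∀ n, 0 ≤ c n) (hsum : ∀ t > 0, Summable fun n => exp (-c n / t))
include hc hsum

theorem summable_div_mul_exp_neg_div {x : ℝ} (hx : 0 < x) :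
    Summable fun n => c n / x * exp (-c n / x) := by
  refine ((hsum (2 * x) (by positivity)).mul_left 2).of_nonneg_of_le
    (fun n => by have := hc n; positivity) fun n => ?_
  simpa only [neg_div, div_div, mul_comm x 2] using mul_exp_neg_le_two_mul_exp_neg_half (c n / x)

theorem hasDerivAt_tsum_exp_neg_div {x : ℝ} (hx : 0 < x) :
    HasDerivAt (fun y => ∑' n, exp (-c n / y)) (∑' n, c n / x ^ 2 * exp (-c n / x)) x := by
  have hxt : x ∈ Set.Ioo (x / 2) (2 * x) := ⟨by linarith, by linarith⟩
  have hderiv : ∀ n, ∀ y ∈ Set.Ioo (x / 2) (2 * x),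
      HasDerivAt (fun z => exp (-c n / z)) (c n / y ^ 2 * exp (-c n / y)) y := by
    intro n y hy
    have hy0 : y ≠ 0 := (lt_trans (half_pos hx) hy.1).ne'
    have h := ((hasDerivAt_inv hy0).const_mul (-c n)).exp
    simp only [← div_eq_mul_inv] at h
    exact h.congr_deriv (by field_simp)
  have hbound : ∀ n, ∀ y ∈ Set.Ioo (x / 2) (2 * x),
      ‖c n / y ^ 2 * exp (-c n / y)‖ ≤ 4 / x * exp (-c n / (4 * x)) := by
    intro n y ⟨hy1, hy2⟩
    have hy0 : 0 < y := lt_trans (half_pos hx) hy1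
    have hcn := hc n
    have h1 : 1 / y ≤ 2 / x := by rw [div_le_div_iff₀ hy0 hx]; linarith
    have h2 : c n / (4 * x) ≤ c n / y / 2 := by
      rw [div_div]; exact div_le_div_of_nonneg_left hcn (by positivity) (by linarith)
    rw [Real.norm_of_nonneg (by positivity)]
    calc c n / y ^ 2 * exp (-c n / y) = 1 / y * (c n / y * exp (-(c n / y))) := by
          rw [neg_div]; ring
      _ ≤ 2 / x * (2 * exp (-(c n / y / 2))) :=
          mul_le_mul h1 (mul_exp_neg_le_two_mul_exp_neg_half _) (by positivity) (by positivity)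
      _ ≤ 2 / x * (2 * exp (-c n / (4 * x))) := by rw [neg_div]; gcongr
      _ = 4 / x * exp (-c n / (4 * x)) := by ring
  exact hasDerivAt_tsum_of_isPreconnected ((hsum (4 * x) (by positivity)).mul_left (4 / x))
    isOpen_Ioo (convex_Ioo _ _).isPreconnected hderiv hbound hxt (hsum x hx) hxt

theorem hasDerivAt_two_div_sqrt_mul_tsum_exp_neg_div {x : ℝ} (hx : 0 < x) :
    HasDerivAt (fun y => 2 / √y * ∑' n, exp (-c n / y))
      ((∑' n, 2 * c n / x * exp (-c n / x) - ∑' n, exp (-c n / x)) / (x * √x)) x := by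
  have hsx : 0 < √x := sqrt_pos.2 hx
  have hdiv_sqrt := ((hasDerivAt_sqrt hx.ne').inv hsx.ne').const_mul 2
  simp only [Pi.inv_apply, ← div_eq_mul_inv] at hdiv_sqrt
  have h2 : ∑' n, 2 * c n / x * exp (-c n / x) = 2 * x * ∑' n, c n / x ^ 2 * exp (-c n / x) := by
    rw [← tsum_mul_left]; congr 1; ext n; field_simp
  refine (hdiv_sqrt.mul (hasDerivAt_tsum_exp_neg_div hc hsum hx)).congr_deriv ?_
  rw [h2, sq_sqrt hx.le]; field_simp; ring

end TsumExpNegDiv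

theorem tsum_sub_tsum_le_of_succ_le {a b : ℕ → ℝ} (ha : Summable a) (hb : Summable b)
    (hab : ∀ n, a (n + 1) ≤ b n) : ∑' n, a n - ∑' n, b n ≤ a 0 := by
  rw [ha.tsum_eq_zero_add]
  linarith [Summable.tsum_le_tsum hab ((summable_nat_add_iff 1).2 ha) hb]

theorem two_mul_pi_mul_add_half_sq_le_exp {m t : ℝ} (hm : 1 ≤ m) (ht : 1 ≤ t) :
    2 * π * (m + 1 / 2) ^ 2 * t ≤ exp (2 * π * m * t) := by
  have hsq : (m + 1 / 2) ^ 2 ≤ π * m ^ 2 * t := by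
    have h3 : 3 * m ^ 2 ≤ π * m ^ 2 * t := by
      have : 3 ≤ π * t := by nlinarith [pi_gt_three]
      nlinarith [sq_nonneg m]
    nlinarith
  calc 2 * π * (m + 1 / 2) ^ 2 * t ≤ 2 * π * (π * m ^ 2 * t) * t := by gcongr
    _ ≤ 1 + 2 * π * m * t + (2 * π * m * t) ^ 2 / 2 := by nlinarith [pi_pos]
    _ ≤ exp (2 * π * m * t) := quadratic_le_exp_of_nonneg (by positivity)

noncomputable def thetaExponent (n : ℕ) : ℝ := π * ((n : ℝ) + 1 / 2) ^ 2

theorem thetaExponent_nonneg (n : ℕ) : 0 ≤ thetaExponent n := by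
  unfold thetaExponent; positivity

theorem thetaExponent_succ (n : ℕ) :
    thetaExponent (n + 1) = thetaExponent n + 2 * π * ((n : ℝ) + 1) := by
  unfold thetaExponent; push_cast; ring

theorem summable_exp_neg_thetaExponent_div {t : ℝ} (ht : 0 < t) :
    Summable fun n => exp (-thetaExponent n / t) := by
  have hr : exp (-π / t) < 1 :=
    exp_lt_one_iff.2 (div_neg_of_neg_of_pos (neg_neg_iff_pos.2 pi_pos) ht)
  refine (summable_geometric_of_lt_one (exp_pos _).le hr).of_nonneg_of_le
    (fun n => (exp_pos _).le) fun n => ?_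
  rw [← exp_nat_mul, exp_le_exp, neg_div, neg_div, mul_neg, neg_le_neg_iff, mul_div_assoc']
  gcongr
  unfold thetaExponent
  nlinarith [pi_pos, sq_nonneg ((n : ℝ) - 1 / 2)]

theorem two_mul_thetaExponent_succ_div_mul_exp_le {x : ℝ} (hx0 : 0 < x) (hx1 : x ≤ 1) (n : ℕ) :
    2 * thetaExponent (n + 1) / x * exp (-thetaExponent (n + 1) / x) ≤
      exp (-thetaExponent n / x) := by
  set s := 2 * π * ((n : ℝ) + 1) * (1 / x)
  have hk : 2 * π * ((n : ℝ) + 1 + 1 / 2) ^ 2 * (1 / x) ≤ exp s :=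
    two_mul_pi_mul_add_half_sq_le_exp (by simp) (by rw [le_div_iff₀ hx0]; linarith)
  calc 2 * thetaExponent (n + 1) / x * exp (-thetaExponent (n + 1) / x)
      = 2 * π * ((n : ℝ) + 1 + 1 / 2) ^ 2 * (1 / x) * exp (-s) * exp (-thetaExponent n / x) := by
        rw [mul_assoc _ (exp _), ← exp_add, thetaExponent_succ]
        unfold s thetaExponent; ring_nf
    _ ≤ exp s * exp (-s) * exp (-thetaExponent n / x) := by gcongr
    _ = exp (-thetaExponent n / x) := by rw [← exp_add, add_neg_cancel, exp_zero, one_mul]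

/-- For `0 < x < 1`, the derivative of `φ(x) = (2/√x) ∑_{n=0}^∞ e^{-π(n+1/2)²/x}`
satisfies `φ'(x) ≤ (π/2) x^{-5/2} e^{-π/(4x)}`. -/
theorem phi_deriv_le_small_x (x : ℝ) (hx0 : 0 < x) (hx1 : x < 1) :
    deriv (fun x : ℝ =>
        (2 / Real.sqrt x) * ∑' n : ℕ, Real.exp (-π * ((n : ℝ) + 1 / 2) ^ 2 / x)) x ≤
      (π / 2) * x ^ (-(5 : ℝ) / 2) * Real.exp (-π / (4 * x)) := by
  have hsum : ∀ t > 0, Summable fun n => exp (-thetaExponent n / t) :=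
    fun _ => summable_exp_neg_thetaExponent_div
  have hφ := hasDerivAt_two_div_sqrt_mul_tsum_exp_neg_div thetaExponent_nonneg hsum hx0
  have ha : Summable fun n => 2 * thetaExponent n / x * exp (-thetaExponent n / x) := by
    simpa only [mul_div_assoc, mul_assoc] using
      (summable_div_mul_exp_neg_div thetaExponent_nonneg hsum hx0).mul_left 2
  have hsplit := tsum_sub_tsum_le_of_succ_le ha (hsum x hx0)
    (two_mul_thetaExponent_succ_div_mul_exp_le hx0 hx1.le)
  have hrpow : x ^ (-(5 : ℝ) / 2) = 1 / (x * x * √x) := by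
    rw [show -(5 : ℝ) / 2 = -(1 + 1 + 1 / 2) by norm_num, rpow_neg hx0.le, rpow_add hx0,
      rpow_add hx0, rpow_one, ← sqrt_eq_rpow, one_div]
  have hφ_eq : (fun x : ℝ => (2 / √x) * ∑' n : ℕ, exp (-π * ((n : ℝ) + 1 / 2) ^ 2 / x)) =
      fun y => 2 / √y * ∑' n, exp (-thetaExponent n / y) := by
    simp only [thetaExponent, neg_mul]
  rw [hφ_eq, hφ.deriv, hrpow]
  calc _ ≤ 2 * thetaExponent 0 / x * exp (-thetaExponent 0 / x) / (x * √x) := by gcongr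
    _ = _ := by unfold thetaExponent; field_simp; ring_nf
end

section
/- If φ : (0,∞) → ℝ is increasing with φ' ≥ 0, φ'(x) ≤ 2π e^{-πx} for all x > 0, φ'(x) ≤ (π/2)x^{-5/2}e^{-π/(4x)} for 0 < x < 1, and lim_{x→∞} φ(x) = 1 with lim_{x→0⁺} φ(x) = 0, then for σ > 0: ∫₀^∞ (1+x²)^{σ/4} φ'(x) dx ≤ 3 · 2^{σ/4} Γ(1 + σ/2). -/
/-!
On `(0, 1]` the weight `(1 + x²)^{σ/4}` is at most `2^{σ/4}`, and since `φ` is monotone with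
`φ(0+) = 0` and `φ ≤ 1`, the integral of `φ'` there is at most `φ(1) ≤ 1`. On `(1, ∞)` the weight
is at most `2^{σ/4} x^{σ/2}` and `φ'(x) ≤ 2πe^{-πx} ≤ (3/2)e^{-x}`, so that part is at most
`(3/2)·2^{σ/4}·Γ(1 + σ/2)`. Convexity of `Γ` gives `Γ(1 + t) ≥ 4/5`, hence `1 ≤ (3/2)·Γ(1 + σ/2)`.
-/

open Real Set Filter MeasureTheory Topology

theorem MonotoneOn.setIntegral_Ioc_deriv_le_sub_of_tendsto {f : ℝ → ℝ} {a b L : ℝ} (hab : a < b)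
    (hf : MonotoneOn f (Ioc a b)) (hfa : Tendsto f (𝓝[>] a) (𝓝 L))
    (hf' : IntegrableOn (deriv f) (Ioc a b)) :
    ∫ x in Ioc a b, deriv f x ≤ f b - L := by
  rw [← intervalIntegral.integral_of_le hab.le]
  have hprim : Tendsto (fun c => ∫ x in c..b, deriv f x) (𝓝[>] a)
      (𝓝 (∫ x in a..b, deriv f x)) := by
    rw [← integrableOn_Icc_iff_integrableOn_Ioc, ← uIcc_of_le hab.le] at hf'
    exact (intervalIntegral.continuousOn_primitive_interval_left hf' a left_mem_uIcc
      |>.mono_of_mem_nhdsWithin (uIcc_of_le hab.le ▸ Icc_mem_nhdsGT hab)).tendsto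
  refine le_of_tendsto_of_tendsto hprim (tendsto_const_nhds.sub hfa) ?_
  filter_upwards [Ioo_mem_nhdsGT hab] with c hc
  have hfc : MonotoneOn f (uIcc c b) := by
    rw [uIcc_of_le hc.2.le]
    exact hf.mono (Icc_subset_Ioc_iff hc.2.le |>.2 ⟨hc.1, le_rfl⟩)
  have hcb : f c ≤ f b := hf ⟨hc.1, hc.2.le⟩ ⟨hab, le_rfl⟩ hc.2.le
  exact (uIcc_of_le (sub_nonneg.2 hcb) ▸ hfc.intervalIntegral_deriv_mem_uIcc).2

theorem one_add_sq_rpow_le_two_rpow {x s : ℝ} (hs : 0 ≤ s) (hx : |x| ≤ 1) :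
    (1 + x ^ 2) ^ s ≤ 2 ^ s := by
  have : x ^ 2 ≤ 1 := sq_le_one_iff_abs_le_one x |>.2 hx
  exact rpow_le_rpow (by positivity) (by linarith) hs

theorem one_add_sq_rpow_le_two_rpow_mul_rpow {x s : ℝ} (hs : 0 ≤ s) (hx : 1 ≤ x) :
    (1 + x ^ 2) ^ s ≤ 2 ^ s * x ^ (2 * s) := by
  calc (1 + x ^ 2) ^ s ≤ (2 * x ^ 2) ^ s := rpow_le_rpow (by positivity) (by nlinarith) hs
    _ = 2 ^ s * x ^ (2 * s) := by
      rw [mul_rpow zero_le_two (by positivity), rpow_mul (by linarith), rpow_two]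

theorem two_pi_mul_exp_neg_pi_mul_le {x : ℝ} (hx : 1 ≤ x) :
    2 * π * exp (-π * x) ≤ 3 / 2 * exp (-x) := by
  have hexp : 5 ≤ exp (π - 1) := by
    nlinarith [quadratic_le_exp_of_nonneg (x := π - 1) (by linarith [pi_gt_three]), pi_gt_three]
  calc 2 * π * exp (-π * x) ≤ 2 * π * exp (-(π - 1) - x) := by gcongr; nlinarith [pi_gt_three]
    _ = 2 * π / exp (π - 1) * exp (-x) := by rw [exp_sub, exp_neg, exp_neg]; ring
    _ ≤ 3 / 2 * exp (-x) := by
        refine mul_le_mul_of_nonneg_right ?_ (exp_pos _).le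
        rw [div_le_iff₀ (exp_pos _)]
        nlinarith [pi_lt_d2]

theorem one_le_Gamma_one_add {t : ℝ} (ht : 1 ≤ t) : 1 ≤ Gamma (1 + t) := by
  have := Gamma_strictMonoOn_Ici.monotoneOn (mem_Ici.2 le_rfl) (mem_Ici.2 (by linarith))
    (by linarith : (2 : ℝ) ≤ 1 + t)
  rwa [Gamma_two] at this

theorem one_le_mul_Gamma_one_add {t : ℝ} (ht₀ : 0 ≤ t) (ht₁ : t ≤ 1) :
    1 ≤ (1 + t - t ^ 2) * Gamma (1 + t) := by
  have hconv := convexOn_Gamma.2 (x := 1 + t) (y := 2 + t) (by simp; linarith) (by simp; linarith)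
    ht₀ (sub_nonneg.2 ht₁) (by ring)
  have hadd : Gamma (2 + t) = (1 + t) * Gamma (1 + t) := by
    rw [show 2 + t = (1 + t) + 1 by ring, Gamma_add_one (by linarith)]
  simp only [smul_eq_mul, show t * (1 + t) + (1 - t) * (2 + t) = 2 by ring, Gamma_two,
    hadd] at hconv
  linarith

theorem four_div_five_le_Gamma_one_add {t : ℝ} (ht : 0 ≤ t) : 4 / 5 ≤ Gamma (1 + t) := by
  rcases le_total t 1 with ht₁ | ht₁
  · nlinarith [one_le_mul_Gamma_one_add ht ht₁, Gamma_pos_of_pos (by linarith : 0 < 1 + t),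
      sq_nonneg (t - 1 / 2)]
  · linarith [one_le_Gamma_one_add ht₁]

theorem integrableOn_one_add_sq_rpow_mul {g : ℝ → ℝ} {s C : ℝ} (hs : 0 ≤ s) (hgm : Measurable g)
    (hg₀ : ∀ x, 0 < x → 0 ≤ g x) (hg : ∀ x, 0 < x → g x ≤ C * exp (-x)) :
    IntegrableOn (fun x => (1 + x ^ 2) ^ s * g x) (Ioi 0) := by
  have hmaj : IntegrableOn
      (fun x => 2 ^ s * C * (exp (-x) * x ^ ((1 : ℝ) - 1) + exp (-x) * x ^ (2 * s + 1 - 1)))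
      (Ioi 0) :=
    ((GammaIntegral_convergent one_pos).add (GammaIntegral_convergent (by positivity))).const_mul _
  refine integrable_of_le_of_le (g₁ := 0) ?_ ?_ ?_ (integrable_zero _ _ _) hmaj
  · exact (((measurable_const.add (measurable_id.pow_const 2)).pow_const s).mul
      hgm).aestronglyMeasurable
  · filter_upwards [ae_restrict_mem measurableSet_Ioi] with x hx
    exact mul_nonneg (by positivity) (hg₀ x hx)
  · filter_upwards [ae_restrict_mem measurableSet_Ioi] with x (hx : 0 < x)
    have hweight : (1 + x ^ 2) ^ s ≤ 2 ^ s * (1 + x ^ (2 * s)) := by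
      rcases le_total x 1 with hx₁ | hx₁
      · nlinarith [one_add_sq_rpow_le_two_rpow hs (abs_le.2 ⟨by linarith, hx₁⟩),
          rpow_nonneg hx.le (2 * s), rpow_pos_of_pos two_pos s]
      · nlinarith [one_add_sq_rpow_le_two_rpow_mul_rpow hs hx₁, rpow_pos_of_pos two_pos s]
    calc (1 + x ^ 2) ^ s * g x ≤ 2 ^ s * (1 + x ^ (2 * s)) * (C * exp (-x)) :=
          mul_le_mul hweight (hg x hx) (hg₀ x hx) (by positivity)
      _ = _ := by simp only [sub_self, rpow_zero, add_sub_cancel_right]; ring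

theorem setIntegral_Ioc_zero_one_one_add_sq_rpow_mul_deriv_le {f : ℝ → ℝ} {s : ℝ} (hs : 0 ≤ s)
    (hf : MonotoneOn f (Ioc 0 1)) (hf₀ : Tendsto f (𝓝[>] 0) (𝓝 0))
    (hf'₀ : ∀ x ∈ Ioc (0 : ℝ) 1, 0 ≤ deriv f x)
    (hint : IntegrableOn (fun x => (1 + x ^ 2) ^ s * deriv f x) (Ioc 0 1)) :
    ∫ x in Ioc 0 1, (1 + x ^ 2) ^ s * deriv f x ≤ 2 ^ s * f 1 := by
  have hf' : IntegrableOn (deriv f) (Ioc 0 1) := by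
    refine integrable_of_le_of_le (g₁ := 0) (measurable_deriv f).aestronglyMeasurable ?_ ?_
      (integrable_zero _ _ _) hint <;>
      filter_upwards [ae_restrict_mem measurableSet_Ioc] with x hx
    · exact hf'₀ x hx
    · exact le_mul_of_one_le_left (hf'₀ x hx) (one_le_rpow (by nlinarith) hs)
  calc ∫ x in Ioc 0 1, (1 + x ^ 2) ^ s * deriv f x
      ≤ ∫ x in Ioc 0 1, 2 ^ s * deriv f x :=
        setIntegral_mono_on hint (hf'.const_mul _) measurableSet_Ioc fun x hx =>
          mul_le_mul_of_nonneg_right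
            (one_add_sq_rpow_le_two_rpow hs (abs_le.2 ⟨by linarith [hx.1], hx.2⟩)) (hf'₀ x hx)
    _ = 2 ^ s * ∫ x in Ioc 0 1, deriv f x := integral_const_mul _ _
    _ ≤ 2 ^ s * (f 1 - 0) := by
        gcongr; exact hf.setIntegral_Ioc_deriv_le_sub_of_tendsto one_pos hf₀ hf'
    _ = 2 ^ s * f 1 := by rw [sub_zero]

theorem setIntegral_Ioi_one_one_add_sq_rpow_mul_le {g : ℝ → ℝ} {s C : ℝ} (hs : 0 ≤ s)
    (hint : IntegrableOn (fun x => (1 + x ^ 2) ^ s * g x) (Ioi 1))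
    (hg₀ : ∀ x, 1 < x → 0 ≤ g x) (hg : ∀ x, 1 < x → g x ≤ C * exp (-x)) :
    ∫ x in Ioi 1, (1 + x ^ 2) ^ s * g x ≤ 2 ^ s * C * Gamma (2 * s + 1) := by
  have hC : 0 ≤ C := nonneg_of_mul_nonneg_left ((hg₀ 2 one_lt_two).trans (hg 2 one_lt_two))
    (exp_pos _)
  have hGamma := GammaIntegral_convergent (s := 2 * s + 1) (by positivity)
  rw [add_sub_cancel_right] at hGamma
  calc ∫ x in Ioi 1, (1 + x ^ 2) ^ s * g x
      ≤ ∫ x in Ioi 1, 2 ^ s * C * (exp (-x) * x ^ (2 * s)) := by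
        refine setIntegral_mono_on hint
          ((hGamma.mono_set (Ioi_subset_Ioi zero_le_one)).const_mul _) measurableSet_Ioi
          fun x (hx : 1 < x) => ?_
        calc (1 + x ^ 2) ^ s * g x ≤ 2 ^ s * x ^ (2 * s) * (C * exp (-x)) :=
              mul_le_mul (one_add_sq_rpow_le_two_rpow_mul_rpow hs hx.le) (hg x hx) (hg₀ x hx)
                (by positivity)
          _ = _ := by ring
    _ = 2 ^ s * C * ∫ x in Ioi 1, exp (-x) * x ^ (2 * s) := integral_const_mul _ _
    _ ≤ 2 ^ s * C * ∫ x in Ioi 0, exp (-x) * x ^ (2 * s) := by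
        refine mul_le_mul_of_nonneg_left (setIntegral_mono_set hGamma ?_
          (Ioi_subset_Ioi zero_le_one).eventuallyLE) (mul_nonneg (by positivity) hC)
        filter_upwards [ae_restrict_mem measurableSet_Ioi] with x (hx : 0 < x)
        positivity
    _ = 2 ^ s * C * Gamma (2 * s + 1) := by
        rw [Gamma_eq_integral (by positivity), add_sub_cancel_right]

theorem integral_bound_pos_sigma_general (φ : ℝ → ℝ)
    (hmono : MonotoneOn φ (Set.Ioi 0))
    (hderiv_nonneg : ∀ x : ℝ, 0 < x → 0 ≤ deriv φ x)
    (hderiv_le : ∀ x : ℝ, 0 < x → deriv φ x ≤ 2 * π * Real.exp (-π * x))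
    (hlim_top : Filter.Tendsto φ Filter.atTop (nhds 1))
    (hlim_zero : Filter.Tendsto φ (nhdsWithin 0 (Set.Ioi 0)) (nhds 0))
    (σ : ℝ) (hσ : 0 < σ) :
    ∫ x in Set.Ioi (0 : ℝ), (1 + x ^ 2) ^ (σ / 4) * deriv φ x ≤
      3 * (2 : ℝ) ^ (σ / 4) * Real.Gamma (1 + σ / 2) := by
  have hs : 0 ≤ σ / 4 := by positivity
  have hint := integrableOn_one_add_sq_rpow_mul hs (measurable_deriv φ) hderiv_nonneg
    fun x hx => (hderiv_le x hx).trans (by gcongr; nlinarith [pi_gt_three])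
  have hφ₁ : φ 1 ≤ 1 := ge_of_tendsto hlim_top <| (eventually_ge_atTop 1).mono fun x hx =>
    hmono (mem_Ioi.2 one_pos) (mem_Ioi.2 (one_pos.trans_le hx)) hx
  have hsmall := setIntegral_Ioc_zero_one_one_add_sq_rpow_mul_deriv_le hs
    (hmono.mono Ioc_subset_Ioi_self) hlim_zero (fun x hx => hderiv_nonneg x hx.1)
    (hint.mono_set Ioc_subset_Ioi_self)
  have htail := setIntegral_Ioi_one_one_add_sq_rpow_mul_le hs
    (hint.mono_set (Ioi_subset_Ioi zero_le_one)) (fun x hx => hderiv_nonneg x (one_pos.trans hx))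
    fun x hx => (hderiv_le x (one_pos.trans hx)).trans (two_pi_mul_exp_neg_pi_mul_le hx.le)
  rw [show 2 * (σ / 4) + 1 = 1 + σ / 2 by ring] at htail
  have hΓ := four_div_five_le_Gamma_one_add (t := σ / 2) (by positivity)
  rw [← Ioc_union_Ioi_eq_Ioi zero_le_one, setIntegral_union (Ioc_disjoint_Ioi le_rfl)
    measurableSet_Ioi (hint.mono_set Ioc_subset_Ioi_self)
    (hint.mono_set (Ioi_subset_Ioi zero_le_one))]
  nlinarith [rpow_pos_of_pos two_pos (σ / 4)]

/-- If `φ` is increasing on `(0,∞)` with `φ' ≥ 0`, `φ'(x) ≤ 2πe^{-πx}` for `x > 0`,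
`φ'(x) ≤ (π/2)x^{-5/2}e^{-π/(4x)}` for `0 < x < 1`, `φ(x) → 1` as `x → ∞` and `φ(x) → 0` as
`x → 0⁺`, then for `σ > 0`, `∫₀^∞ (1+x²)^{σ/4} φ'(x) dx ≤ 3·2^{σ/4} Γ(1+σ/2)`. -/
theorem integral_bound_pos_sigma (φ : ℝ → ℝ)
    (hmono : MonotoneOn φ (Set.Ioi 0))
    (hderiv_nonneg : ∀ x : ℝ, 0 < x → 0 ≤ deriv φ x)
    (hderiv_le : ∀ x : ℝ, 0 < x → deriv φ x ≤ 2 * π * Real.exp (-π * x))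
    (hderiv_le' : ∀ x : ℝ, 0 < x → x < 1 →
      deriv φ x ≤ (π / 2) * x ^ (-(5 : ℝ) / 2) * Real.exp (-π / (4 * x)))
    (hlim_top : Filter.Tendsto φ Filter.atTop (nhds 1))
    (hlim_zero : Filter.Tendsto φ (nhdsWithin 0 (Set.Ioi 0)) (nhds 0))
    (σ : ℝ) (hσ : 0 < σ) :
    ∫ x in Set.Ioi (0 : ℝ), (1 + x ^ 2) ^ (σ / 4) * deriv φ x ≤
      3 * (2 : ℝ) ^ (σ / 4) * Real.Gamma (1 + σ / 2) :=
  integral_bound_pos_sigma_general φ hmono hderiv_nonneg hderiv_le hlim_top hlim_zero σ hσ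
end
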